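/- arXiv:1804.03788 — 7 statements merged into one kernel-verified Lean document; each statement's English description precedes it below -/
import Mathlib

section
/- For U_*(z) = (3z^2 - π^2)/18 and c_* = π^2/9, the function U_* satisfies the travelling-wave equation (c_* - U_*(z)) U_*'(z) = -∫_0^z U_*(s) ds for every z ∈ (-π, π). -/
open Real

theorem ustar_travelling_wave_eq :
    ∀ z ∈ Set.Ioo (-π) π,
      HasDerivAt (fun z : ℝ => (3 * z ^ 2 - π ^ 2) / 18) (z / 3) z ∧
      (π ^ 2 / 9 - (3 * z ^ 2 - π ^ 2) / 18) * (z / 3)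
        = -∫ s in (0 : ℝ)..z, (3 * s ^ 2 - π ^ 2) / 18 := by
  intro z _
  constructor
  · have h : HasDerivAt (fun z : ℝ => (3 * z ^ 2 - π ^ 2) / 18)
        (3 * ((2:ℕ) * z ^ (2-1)) / 18) z := by
      exact (((hasDerivAt_pow 2 z).const_mul 3).sub_const _).div_const 18
    convert h using 1
    push_cast
    ring
  · have : (∫ s in (0:ℝ)..z, (3 * s ^ 2 - π ^ 2) / 18)
        = (∫ s in (0:ℝ)..z, s ^ 2) * 3 / 18 - z * π ^ 2 / 18 := by
      rw [intervalIntegral.integral_div]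
      rw [show (fun s : ℝ => 3 * s ^ 2 - π ^ 2) = fun s : ℝ => 3 * s ^ 2 - π ^ 2 from rfl]
      rw [intervalIntegral.integral_sub (((continuous_pow 2).intervalIntegrable _ _).const_mul 3)
        intervalIntegrable_const]
      rw [intervalIntegral.integral_const_mul, intervalIntegral.integral_const]
      simp [smul_eq_mul]
      ring
    rw [this, integral_pow]
    ring
end

section
/- Suppose U : [-π, π] → ℝ is continuously differentiable on (-π, π), satisfies U(z) < c for all z ∈ (-π, π), U(±π) = c with c > 0, ∫_{-π}^{π} U = 0, U is even, U'(0) = 0, and U satisfies (c - U(z)) U'(z) + ∫_0^z U(s) ds = 0 on (-π, π). Then c = π^2/9 and U(z) = (z^2 - 3c)/6 = (3z^2 - π^2)/18 for all z ∈ [-π, π]. -/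
/-!
Write `F z = ∫₀ᶻ U` and `V = c - U`, so that the equation reads `V U' + F = 0` with `F' = U`.
Then `F² - c V² + (2/3) V³` is a first integral; it vanishes at `z = π`, where `V = 0` and,
by evenness and zero mean, `F = 0`. Dividing by `V² > 0` gives `U'² = (c + 2U)/3`, and
differentiating `U' = -F/V` then gives `U'' = 1/3`. The equation at `z = 0` forces `U'(0) = 0`,
hence `U(0) = -c/2` and `U = U(0) + z²/6`; evaluating at `z = π` gives `c = π²/9`.
-/

open Real

open Set MeasureTheory Filter Topology

theorem eqOn_Ioo_of_hasDerivAt {f g f' : ℝ → ℝ} {a b x₀ : ℝ}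
    (hf : ∀ x ∈ Ioo a b, HasDerivAt f (f' x) x) (hg : ∀ x ∈ Ioo a b, HasDerivAt g (f' x) x)
    (hx₀ : x₀ ∈ Ioo a b) (h : f x₀ = g x₀) : EqOn f g (Ioo a b) :=
  isOpen_Ioo.eqOn_of_deriv_eq isPreconnected_Ioo
    (fun x hx => (hf x hx).differentiableAt.differentiableWithinAt)
    (fun x hx => (hg x hx).differentiableAt.differentiableWithinAt)
    (fun x hx => (hf x hx).deriv.trans (hg x hx).deriv.symm) hx₀ h

theorem eqOn_Icc_of_hasDerivAt {f g f' : ℝ → ℝ} {a b x₀ : ℝ}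
    (hfc : ContinuousOn f (Icc a b)) (hgc : ContinuousOn g (Icc a b))
    (hf : ∀ x ∈ Ioo a b, HasDerivAt f (f' x) x) (hg : ∀ x ∈ Ioo a b, HasDerivAt g (f' x) x)
    (hx₀ : x₀ ∈ Ioo a b) (h : f x₀ = g x₀) : EqOn f g (Icc a b) :=
  (eqOn_Ioo_of_hasDerivAt hf hg hx₀ h).of_subset_closure hfc hgc Ioo_subset_Icc_self
    (closure_Ioo (hx₀.1.trans hx₀.2).ne).ge

theorem ContinuousOn.hasDerivAt_integral_Ioo {f : ℝ → ℝ} {a b x₀ z : ℝ}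
    (hf : ContinuousOn f (Ioo a b)) (hx₀ : x₀ ∈ Ioo a b) (hz : z ∈ Ioo a b) :
    HasDerivAt (fun x => ∫ t in x₀..x, f t) (f z) z :=
  have hfz : ContinuousAt f z := hf.continuousAt (isOpen_Ioo.mem_nhds hz)
  intervalIntegral.integral_hasDerivAt_right
    ((hf.mono (ordConnected_Ioo.uIcc_subset hx₀ hz)).intervalIntegrable)
    (hf.stronglyMeasurableAtFilter isOpen_Ioo z hz) hfz

theorem intervalIntegral.integral_neg_self_eq_two_mul_of_even {f : ℝ → ℝ} {a : ℝ}
    (heven : ∀ x, f (-x) = f x) (hf : IntervalIntegrable f volume (-a) a) :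
    ∫ x in (-a)..a, f x = 2 * ∫ x in 0..a, f x := by
  have h0 : (0 : ℝ) ∈ uIcc (-a) a := by
    rcases le_total 0 a with h | h
    · exact mem_uIcc_of_le (by linarith) h
    · exact mem_uIcc_of_ge h (by linarith)
  rw [← integral_add_adjacent_intervals (hf.mono_set (uIcc_subset_uIcc left_mem_uIcc h0))
    (hf.mono_set (uIcc_subset_uIcc h0 right_mem_uIcc)), two_mul]
  simpa [heven] using (integral_comp_neg (a := 0) (b := a) f).symm

noncomputable def waveEnergy (c : ℝ) (F U : ℝ → ℝ) (z : ℝ) : ℝ :=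
  F z ^ 2 - c * (c - U z) ^ 2 + 2 / 3 * (c - U z) ^ 3

theorem hasDerivAt_waveEnergy {c u' z : ℝ} {F U : ℝ → ℝ} (hF : HasDerivAt F (U z) z)
    (hU : HasDerivAt U u' z) (h : (c - U z) * u' + F z = 0) :
    HasDerivAt (waveEnergy c F U) 0 z := by
  have hV : HasDerivAt (fun x => c - U x) (-u') z := by simpa using hU.const_sub c
  refine HasDerivAt.congr_deriv (f := waveEnergy c F U)
    (((hF.pow 2).sub ((hV.pow 2).const_mul c)).add ((hV.pow 3).const_mul (2 / 3))) ?_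
  simp only [Nat.cast_ofNat, Nat.add_one_sub_one, pow_one]
  linear_combination (2 * U z) * h

section TravelingWave

variable {c L : ℝ} {U U' F : ℝ → ℝ}

theorem waveEnergy_eq_zero (hUc : ContinuousOn U (Icc (-L) L))
    (hFc : ContinuousOn F (Icc (-L) L)) (hU : ∀ z ∈ Ioo (-L) L, HasDerivAt U (U' z) z)
    (hF : ∀ z ∈ Ioo (-L) L, HasDerivAt F (U z) z) (hUL : U L = c) (hFL : F L = 0)
    (heq : ∀ z ∈ Ioo (-L) L, (c - U z) * U' z + F z = 0) {z : ℝ} (hz : z ∈ Ioo (-L) L) :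
    waveEnergy c F U z = 0 := by
  have hEc : ContinuousOn (waveEnergy c F U) (Icc (-L) L) := by
    unfold waveEnergy; fun_prop
  have hconst := eqOn_Icc_of_hasDerivAt hEc continuousOn_const
    (fun x hx => hasDerivAt_waveEnergy (hF x hx) (hU x hx) (heq x hx))
    (fun x _ => hasDerivAt_const x (waveEnergy c F U z)) hz rfl
    (right_mem_Icc.2 (hz.1.trans hz.2).le)
  simp only [waveEnergy, hUL, hFL] at hconst ⊢
  linarith

theorem sq_eq_of_waveEnergy_eq_zero (hlt : ∀ z ∈ Ioo (-L) L, U z < c)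
    (heq : ∀ z ∈ Ioo (-L) L, (c - U z) * U' z + F z = 0)
    {z : ℝ} (hz : z ∈ Ioo (-L) L) (hE : waveEnergy c F U z = 0) :
    U' z ^ 2 = (c + 2 * U z) / 3 := by
  have hfactor : (c - U z) ^ 2 * (U' z ^ 2 - (c + 2 * U z) / 3) = 0 := by
    unfold waveEnergy at hE
    linear_combination hE - (F z - (c - U z) * U' z) * heq z hz
  have hV : (c - U z) ^ 2 ≠ 0 := pow_ne_zero 2 (sub_ne_zero.2 (hlt z hz).ne')
  linear_combination (mul_eq_zero.1 hfactor).resolve_left hV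

theorem hasDerivAt_one_third_of_sq_eq (hU : ∀ z ∈ Ioo (-L) L, HasDerivAt U (U' z) z)
    (hF : ∀ z ∈ Ioo (-L) L, HasDerivAt F (U z) z) (hlt : ∀ z ∈ Ioo (-L) L, U z < c)
    (heq : ∀ z ∈ Ioo (-L) L, (c - U z) * U' z + F z = 0)
    (hsq : ∀ z ∈ Ioo (-L) L, U' z ^ 2 = (c + 2 * U z) / 3) {z : ℝ} (hz : z ∈ Ioo (-L) L) :
    HasDerivAt U' (1 / 3) z := by
  have hV : ∀ x ∈ Ioo (-L) L, c - U x ≠ 0 := fun x hx => sub_ne_zero.2 (hlt x hx).ne'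
  have hquot : (fun x => -F x / (c - U x)) =ᶠ[𝓝 z] U' :=
    eventually_of_mem (isOpen_Ioo.mem_nhds hz) fun x hx => by
      rw [div_eq_iff (hV x hx)]; linear_combination -heq x hx
  refine ((hF z hz).neg.div ((hU z hz).const_sub c) (hV z hz)).congr_of_eventuallyEq
    hquot.symm |>.congr_deriv ?_
  rw [Pi.neg_apply, div_eq_iff (pow_ne_zero 2 (hV z hz))]
  linear_combination (-U' z) * heq z hz + (c - U z) * hsq z hz

theorem eq_parabola_of_travelingWave (hL : 0 < L) (hUc : ContinuousOn U (Icc (-L) L))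
    (hFc : ContinuousOn F (Icc (-L) L)) (hU : ∀ z ∈ Ioo (-L) L, HasDerivAt U (U' z) z)
    (hF : ∀ z ∈ Ioo (-L) L, HasDerivAt F (U z) z) (hlt : ∀ z ∈ Ioo (-L) L, U z < c)
    (hUL : U L = c) (hF0 : F 0 = 0) (hFL : F L = 0)
    (heq : ∀ z ∈ Ioo (-L) L, (c - U z) * U' z + F z = 0) :
    c = L ^ 2 / 9 ∧ ∀ z ∈ Icc (-L) L, U z = (3 * z ^ 2 - L ^ 2) / 18 := by
  have h0 : (0 : ℝ) ∈ Ioo (-L) L := ⟨neg_lt_zero.2 hL, hL⟩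
  have hsq : ∀ z ∈ Ioo (-L) L, U' z ^ 2 = (c + 2 * U z) / 3 := fun z hz =>
    sq_eq_of_waveEnergy_eq_zero hlt heq hz (waveEnergy_eq_zero hUc hFc hU hF hUL hFL heq hz)
  have hU'0 : U' 0 = 0 := by
    have h := heq 0 h0
    rw [hF0, add_zero] at h
    exact (mul_eq_zero.1 h).resolve_left (sub_ne_zero.2 (hlt 0 h0).ne')
  have hU0 : U 0 = -c / 2 := by
    have h := hsq 0 h0
    rw [hU'0] at h
    linarith
  have hslope : EqOn U' (· / 3) (Ioo (-L) L) :=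
    eqOn_Ioo_of_hasDerivAt (fun x => hasDerivAt_one_third_of_sq_eq hU hF hlt heq hsq)
      (fun x _ => (hasDerivAt_id x).div_const 3) h0 (by simp [hU'0])
  have hparabola : EqOn U (fun z => U 0 + z ^ 2 / 6) (Icc (-L) L) :=
    eqOn_Icc_of_hasDerivAt hUc (by fun_prop) hU
      (fun x hx => (((hasDerivAt_pow 2 x).div_const 6).const_add (U 0)).congr_deriv
        (by rw [hslope hx]; ring))
      h0 (by simp)
  have hc : c = L ^ 2 / 9 := by
    linarith [hparabola (right_mem_Icc.2 (neg_le_self hL.le)), hUL, hU0]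
  refine ⟨hc, fun z hz => ?_⟩
  rw [hparabola hz, hU0, hc]
  ring

end TravelingWave

theorem uniqueness_of_peaked_wave_general
    (c : ℝ) (U U' : ℝ → ℝ)
    (hUcont : ContinuousOn U (Set.Icc (-π) π))
    (hderiv : ∀ z ∈ Set.Ioo (-π) π, HasDerivAt U (U' z) z)
    (hlt : ∀ z ∈ Set.Ioo (-π) π, U z < c)
    (hpi : U π = c)
    (hmean : ∫ z in (-π)..π, U z = 0)
    (heven : ∀ z, U (-z) = U z)
    (heq : ∀ z ∈ Set.Ioo (-π) π,
      (c - U z) * U' z + ∫ s in (0 : ℝ)..z, U s = 0) :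
    c = π ^ 2 / 9 ∧ ∀ z ∈ Set.Icc (-π) π, U z = (3 * z ^ 2 - π ^ 2) / 18 := by
  have h0 : (0 : ℝ) ∈ Ioo (-π) π := ⟨neg_lt_zero.2 pi_pos, pi_pos⟩
  have hπ : -π ≤ π := neg_le_self pi_pos.le
  have hUint : IntervalIntegrable U volume (-π) π := hUcont.intervalIntegrable_of_Icc hπ
  have hFcont : ContinuousOn (fun z => ∫ s in (0 : ℝ)..z, U s) (Icc (-π) π) := by
    rw [← uIcc_of_le hπ]
    exact intervalIntegral.continuousOn_primitive_interval' hUint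
      (by rw [uIcc_of_le hπ]; exact Ioo_subset_Icc_self h0)
  have hFπ : ∫ s in (0 : ℝ)..π, U s = 0 := by
    linarith [intervalIntegral.integral_neg_self_eq_two_mul_of_even heven hUint]
  have hUo : ContinuousOn U (Ioo (-π) π) := fun z hz =>
    (hderiv z hz).continuousAt.continuousWithinAt
  exact eq_parabola_of_travelingWave pi_pos hUcont hFcont hderiv
    (fun z hz => hUo.hasDerivAt_integral_Ioo h0 hz) hlt hpi intervalIntegral.integral_same hFπ heq

theorem uniqueness_of_peaked_wave
    (c : ℝ) (hc : 0 < c) (U U' : ℝ → ℝ)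
    (hUcont : ContinuousOn U (Set.Icc (-π) π))
    (hU'cont : ContinuousOn U' (Set.Ioo (-π) π))
    (hderiv : ∀ z ∈ Set.Ioo (-π) π, HasDerivAt U (U' z) z)
    (hlt : ∀ z ∈ Set.Ioo (-π) π, U z < c)
    (hpi : U π = c) (hmpi : U (-π) = c)
    (hmean : ∫ z in (-π)..π, U z = 0)
    (heven : ∀ z, U (-z) = U z)
    (hzero : U' 0 = 0)
    (heq : ∀ z ∈ Set.Ioo (-π) π,
      (c - U z) * U' z + ∫ s in (0 : ℝ)..z, U s = 0) :
    c = π ^ 2 / 9 ∧ ∀ z ∈ Set.Icc (-π) π, U z = (3 * z ^ 2 - π ^ 2) / 18 :=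
  uniqueness_of_peaked_wave_general c U U' hUcont hderiv hlt hpi hmean heven heq
end

section
/- Let U be a C^1 solution of (c - U(z)) U'(z) + g(z) = 0 on an interval I, where g(z) = ∫_0^z U(s) ds. Then the quantity E(z) = (1/2)(c - U(z))^2 (U'(z))^2 + (c/2) U(z)^2 - (1/3) U(z)^3 is constant on I. -/
open Real

theorem first_order_invariant
    (a b c : ℝ) (U U' : ℝ → ℝ)
    (hderiv : ∀ z ∈ Set.Ioo a b, HasDerivAt U (U' z) z)
    (hU'cont : ContinuousOn U' (Set.Ioo a b))
    (heq : ∀ z ∈ Set.Ioo a b,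
      (c - U z) * U' z + ∫ s in (0 : ℝ)..z, U s = 0) :
    ∀ z ∈ Set.Ioo a b, ∀ w ∈ Set.Ioo a b,
      (1 / 2) * (c - U z) ^ 2 * (U' z) ^ 2 + c / 2 * (U z) ^ 2 - 1 / 3 * (U z) ^ 3
        = (1 / 2) * (c - U w) ^ 2 * (U' w) ^ 2 + c / 2 * (U w) ^ 2 - 1 / 3 * (U w) ^ 3 := by
  intro z hz w hw
  set I := Set.Ioo a b with hI
  have hIopen : IsOpen I := isOpen_Ioo
  have hUcont : ContinuousOn U I := fun x hx =>
    (hderiv x hx).continuousAt.continuousWithinAt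
  set h : ℝ → ℝ := (fun t => ∫ s in (0 : ℝ)..t, U s) with hh
  set F : ℝ → ℝ := fun t => (1/2) * (h t)^2 + c/2 * (U t)^2 - 1/3 * (U t)^3 with hF
  have hEF : ∀ x ∈ I,
      (1 / 2) * (c - U x) ^ 2 * (U' x) ^ 2 + c / 2 * (U x) ^ 2 - 1 / 3 * (U x) ^ 3 = F x := by
    intro x hx
    have e := heq x hx
    have e2 : (c - U x) * U' x = -(h x) := by
      have : h x = ∫ s in (0 : ℝ)..x, U s := rfl
      linarith [e, this ▸ (rfl : h x = h x)]
    simp only [hF]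
    rw [show (1/2 : ℝ) * (c - U x) ^ 2 * (U' x) ^ 2 = (1/2) * ((c - U x) * U' x)^2 by ring, e2]
    ring
  have key : ∀ x ∈ I, HasDerivAt F 0 x := by
    intro x hx
    have hcx : ContinuousAt U x := (hderiv x hx).continuousAt
    by_cases hint : IntervalIntegrable U MeasureTheory.volume 0 x
    · have hmeas : StronglyMeasurableAtFilter U (nhds x) :=
        ContinuousAt.stronglyMeasurableAtFilter hIopen (fun y hy => (hderiv y hy).continuousAt) x hx
      have hdh : HasDerivAt h (U x) x :=
        intervalIntegral.integral_hasDerivAt_right hint hmeas hcx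
      have hD : HasDerivAt F
          ((1/2) * (2 * h x ^ 1 * U x) + c/2 * (2 * U x ^ 1 * U' x)
            - 1/3 * (3 * U x ^ 2 * U' x)) x := by
        exact (((hdh.pow 2).const_mul (1/2)).add
          (((hderiv x hx).pow 2).const_mul (c/2))).sub
          (((hderiv x hx).pow 3).const_mul (1/3))
      have e := heq x hx
      have e2 : (c - U x) * U' x + h x = 0 := e
      have : ((1/2) * (2 * h x ^ 1 * U x) + c/2 * (2 * U x ^ 1 * U' x)
            - 1/3 * (3 * U x ^ 2 * U' x)) = 0 := by linear_combination U x * e2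
      rwa [this] at hD
    · have hzero : ∀ t ∈ I, h t = 0 := by
        intro t ht
        apply intervalIntegral.integral_undef
        intro hcontra
        apply hint
        have hsub : Set.uIcc t x ⊆ I := (Set.ordConnected_Ioo).uIcc_subset ht hx
        exact hcontra.trans ((hUcont.mono hsub).intervalIntegrable)
      have e := heq x hx
      have e2 : (c - U x) * U' x = 0 := by
        have := hzero x hx
        simp only [hh] at this
        linarith [e, this]
      have hG : HasDerivAt (fun t => c/2 * (U t)^2 - 1/3 * (U t)^3)
          (c/2 * (2 * U x ^ 1 * U' x) - 1/3 * (3 * U x ^ 2 * U' x)) x :=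
        (((hderiv x hx).pow 2).const_mul (c/2)).sub (((hderiv x hx).pow 3).const_mul (1/3))
      have hval : c/2 * (2 * U x ^ 1 * U' x) - 1/3 * (3 * U x ^ 2 * U' x) = 0 := by
        linear_combination U x * e2
      rw [hval] at hG
      apply hG.congr_of_eventuallyEq
      filter_upwards [hIopen.mem_nhds hx] with t ht
      simp [hF, hzero t ht]
  have hdiff : DifferentiableOn ℝ F I := fun x hx =>
    (key x hx).differentiableAt.differentiableWithinAt
  have hfz : ∀ x ∈ I, fderivWithin ℝ F I x = 0 := by
    intro x hx
    have h1 : HasFDerivAt F (ContinuousLinearMap.smulRight (1 : ℝ →L[ℝ] ℝ) (0:ℝ)) x :=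
      (key x hx).hasFDerivAt
    have h2 := h1.hasFDerivWithinAt.fderivWithin (hIopen.uniqueDiffWithinAt hx)
    rw [h2]
    ext t
    simp
  have hconst := (convex_Ioo a b).is_const_of_fderivWithin_eq_zero hdiff hfz hz hw
  rw [hEF z hz, hEF w hw, hconst]
end

section
/- The function Z(s,t) = π (s cosh(πt/6) - π sinh(πt/6)) / (π cosh(πt/6) - s sinh(πt/6)) satisfies, for each s ∈ [-π, π], the ODE ∂_t Z(s,t) = (1/6)(Z(s,t)^2 - π^2) with initial condition Z(s,0) = s, and Z(s,t) ∈ [-π, π] for all t ∈ ℝ when s ∈ [-π, π]. -/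
open Real

noncomputable def Zchar (s t : ℝ) : ℝ :=
  π * (s * Real.cosh (π * t / 6) - π * Real.sinh (π * t / 6)) /
    (π * Real.cosh (π * t / 6) - s * Real.sinh (π * t / 6))

/-!
Write `Z = π N / D` with `N = s cosh a - π sinh a`, `D = π cosh a - s sinh a`, `a = π t / 6`.
Differentiating in `t` swaps the two combinations, `N' = -(π/6) D` and `D' = -(π/6) N`, which turns
`Z' = π (N' D - N D') / D²` into the Riccati right-hand side. For `|s| ≤ π` the differences
`D ∓ N = (π ∓ s) e^{±a}` are nonnegative, so `|N| ≤ D`, i.e. `|Z| ≤ π`.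
-/

lemma hasDerivAt_mul_cosh_sub_mul_sinh {a : ℝ → ℝ} {k t : ℝ} (ha : HasDerivAt a k t)
    (p q : ℝ) :
    HasDerivAt (fun t => p * cosh (a t) - q * sinh (a t))
      (-(k * (q * cosh (a t) - p * sinh (a t)))) t :=
  ((ha.cosh.const_mul p).sub (ha.sinh.const_mul q)).congr_deriv (by ring)

lemma hasDerivAt_div_of_deriv_swap {N D : ℝ → ℝ} {k t : ℝ}
    (hN : HasDerivAt N (-(k * D t)) t) (hD : HasDerivAt D (-(k * N t)) t) (hD₀ : D t ≠ 0) :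
    HasDerivAt (fun t => N t / D t) (k * ((N t / D t) ^ 2 - 1)) t :=
  (hN.div hD hD₀).congr_deriv (by field_simp; ring)

lemma abs_sinh_lt_cosh (a : ℝ) : |sinh a| < cosh a :=
  abs_lt.2 ⟨by linarith [sinh_lt_cosh (-a), sinh_neg a, cosh_neg a], sinh_lt_cosh a⟩

lemma mul_cosh_sub_mul_sinh_pos {c s : ℝ} (hc : 0 < c) (hs : |s| ≤ c) (a : ℝ) :
    0 < c * cosh a - s * sinh a :=
  calc 0 < c * (cosh a - |sinh a|) := mul_pos hc (sub_pos.2 (abs_sinh_lt_cosh a))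
    _ ≤ c * cosh a - s * sinh a := by
      linarith [le_abs_self (s * sinh a), abs_mul s (sinh a),
        mul_le_mul_of_nonneg_right hs (abs_nonneg (sinh a))]

lemma abs_mul_cosh_sub_mul_sinh_le {c s : ℝ} (hs : |s| ≤ c) (a : ℝ) :
    |s * cosh a - c * sinh a| ≤ c * cosh a - s * sinh a := by
  have hsub : (c * cosh a - s * sinh a) - (s * cosh a - c * sinh a) = (c - s) * exp a := by
    rw [← cosh_add_sinh]; ring
  have hadd : (c * cosh a - s * sinh a) + (s * cosh a - c * sinh a) = (c + s) * exp (-a) := by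
    rw [← cosh_sub_sinh]; ring
  obtain ⟨hs₁, hs₂⟩ := abs_le.1 hs
  have hsub_nonneg := mul_nonneg (sub_nonneg.2 hs₂) (exp_pos a).le
  have hadd_nonneg := mul_nonneg (neg_le_iff_add_nonneg.1 hs₁) (exp_pos (-a)).le
  exact abs_le.2 ⟨by linarith, by linarith⟩

lemma Zchar_eq_mul_div (s t : ℝ) :
    Zchar s t = π * ((s * cosh (π * t / 6) - π * sinh (π * t / 6)) /
      (π * cosh (π * t / 6) - s * sinh (π * t / 6))) :=
  mul_div_assoc _ _ _

lemma Zchar_zero (s : ℝ) : Zchar s 0 = s := by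
  simp [Zchar, pi_ne_zero]

lemma hasDerivAt_Zchar {s : ℝ} (hs : |s| ≤ π) (t : ℝ) :
    HasDerivAt (fun t => Zchar s t) ((Zchar s t ^ 2 - π ^ 2) / 6) t := by
  have ha : HasDerivAt (fun t => π * t / 6) (π / 6) t := by
    simpa using ((hasDerivAt_id t).const_mul π).div_const 6
  have hquot := hasDerivAt_div_of_deriv_swap
    (N := fun t => s * cosh (π * t / 6) - π * sinh (π * t / 6))
    (D := fun t => π * cosh (π * t / 6) - s * sinh (π * t / 6))
    (hasDerivAt_mul_cosh_sub_mul_sinh ha s π) (hasDerivAt_mul_cosh_sub_mul_sinh ha π s)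
    (mul_cosh_sub_mul_sinh_pos pi_pos hs _).ne'
  simp only [Zchar_eq_mul_div]
  exact (hquot.const_mul π).congr_deriv (by ring)

lemma Zchar_mem_Icc {s : ℝ} (hs : |s| ≤ π) (t : ℝ) : Zchar s t ∈ Set.Icc (-π) π := by
  have hD := mul_cosh_sub_mul_sinh_pos pi_pos hs (π * t / 6)
  rw [Set.mem_Icc, ← abs_le, Zchar_eq_mul_div, abs_mul, abs_of_pos pi_pos, abs_div,
    abs_of_pos hD]
  exact mul_le_of_le_one_right pi_pos.le
    ((div_le_one hD).2 (abs_mul_cosh_sub_mul_sinh_le hs _))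

theorem characteristic_curves_ODE :
    ∀ s ∈ Set.Icc (-π) π,
      Zchar s 0 = s ∧
      (∀ t : ℝ, HasDerivAt (fun t => Zchar s t) (((Zchar s t) ^ 2 - π ^ 2) / 6) t) ∧
      (∀ t : ℝ, Zchar s t ∈ Set.Icc (-π) π) := by
  intro s hs
  have hs' : |s| ≤ π := abs_le.2 hs
  exact ⟨Zchar_zero s, hasDerivAt_Zchar hs', Zchar_mem_Icc hs'⟩
end

section
/- Suppose v : [0, T] → L^2(-π, π) is a solution of the full linearized equation v_t + (1/6)∂_z[(z^2 - π^2)v] = ∂_z^{-1} v with zero mean, and define E(t) = ∫_{-π}^{π} v(z,t)^2 dz. Then (d/dt)(1/2)E(t) = -(1/6)∫_{-π}^{π} z v(z,t)^2 dz, and consequently E(t) ≤ E(0) e^{πt/3} for all t ∈ [0, T]. -/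
/-!
Multiplying the equation by `2v` and integrating over `[-π, π]`, the nonlocal term gives
`∫ 2 g v = [g²]_{-π}^{π} = 0` because the antiderivative `g` is periodic, and the transport term
gives `(1/6) ∫ (z² - π²) ∂_z(v²) + (2/3) ∫ z v² = (1/3) ∫ z v²` after one integration by parts,
whose boundary term vanishes because the weight `z² - π²` vanishes at `±π`. Hence
`E' = -(1/3) ∫ z v² ≤ (π/3) E` since `|z| ≤ π`, and Grönwall's inequality gives the bound.
-/

open Real Set Function intervalIntegral
open scoped MeasureTheory

theorem hasDerivAt_intervalIntegral_of_continuous {F F' : ℝ → ℝ → ℝ} {a b : ℝ}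
    (hF : ∀ t, Continuous (F t)) (hF' : Continuous (uncurry F'))
    (hderiv : ∀ t z, HasDerivAt (fun t => F t z) (F' t z) t) (t₀ : ℝ) :
    HasDerivAt (fun t => ∫ z in a..b, F t z) (∫ z in a..b, F' t₀ z) t₀ := by
  have hK : IsCompact (Icc (t₀ - 1) (t₀ + 1) ×ˢ uIcc a b) := isCompact_Icc.prod isCompact_uIcc
  obtain ⟨M, hM⟩ := hK.exists_bound_of_continuousOn hF'.continuousOn
  have hdom : ∀ᵐ z, z ∈ uIoc a b → ∀ t ∈ Metric.ball t₀ 1, ‖F' t z‖ ≤ M := by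
    refine MeasureTheory.ae_of_all _ fun z hz t ht => hM (t, z) ⟨?_, uIoc_subset_uIcc hz⟩
    rw [Metric.mem_ball, Real.dist_eq, abs_lt] at ht
    constructor <;> linarith
  exact (hasDerivAt_integral_of_dominated_loc_of_deriv_le (Metric.ball_mem_nhds t₀ one_pos)
    (.of_forall fun t => (hF t).aestronglyMeasurable) ((hF t₀).intervalIntegrable _ _)
    (hF'.uncurry_left t₀).aestronglyMeasurable hdom intervalIntegrable_const
    (MeasureTheory.ae_of_all _ fun z _ t _ => hderiv t z)).2

theorem integral_mul_deriv_eq_zero_of_eq {g v : ℝ → ℝ} {a b : ℝ}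
    (hg : ∀ z, HasDerivAt g (v z) z) (hv : Continuous v) (hab : g a = g b) :
    ∫ z in a..b, g z * v z = 0 := by
  have hv' := hv.intervalIntegrable (μ := MeasureTheory.volume) a b
  have h := integral_deriv_mul_eq_sub (fun z _ => hg z) (fun z _ => hg z) hv' hv'
  simp_rw [mul_comm (v _) (g _), ← two_mul] at h
  rw [integral_const_mul, hab, sub_self, mul_eq_zero] at h
  exact h.resolve_left two_ne_zero

theorem integral_deriv_weight_mul_sq_eq_zero {w w' u u' : ℝ → ℝ} {a b : ℝ}
    (hw : ∀ z, HasDerivAt w (w' z) z) (hu : ∀ z, HasDerivAt u (u' z) z)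
    (hw' : Continuous w') (hu' : Continuous u') (ha : w a = 0) (hb : w b = 0) :
    ∫ z in a..b, w' z * u z ^ 2 + w z * (2 * u z * u' z) = 0 := by
  have hu2 : ∀ z, HasDerivAt (fun z => u z ^ 2) (2 * u z * u' z) z := fun z => by
    simpa using (hu z).fun_pow 2
  have hcont : Continuous u := continuous_iff_continuousAt.2 fun z => (hu z).continuousAt
  rw [integral_deriv_mul_eq_sub (fun z _ => hw z) (fun z _ => hu2 z)
    (hw'.intervalIntegrable _ _) ((by fun_prop : Continuous _).intervalIntegrable _ _), ha, hb]
  ring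

theorem neg_integral_mul_sq_le {u : ℝ → ℝ} {c : ℝ} (hu : Continuous u) (hc : 0 ≤ c) :
    -∫ z in (-c)..c, z * u z ^ 2 ≤ c * ∫ z in (-c)..c, u z ^ 2 := by
  have hsum : ∫ z in (-c)..c, (c + z) * u z ^ 2
      = c * (∫ z in (-c)..c, u z ^ 2) + ∫ z in (-c)..c, z * u z ^ 2 := by
    simp_rw [add_mul]
    rw [integral_add ((by fun_prop : Continuous fun z => c * u z ^ 2).intervalIntegrable _ _)
      ((by fun_prop : Continuous fun z => z * u z ^ 2).intervalIntegrable _ _), integral_const_mul]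
  have hnonneg : 0 ≤ ∫ z in (-c)..c, (c + z) * u z ^ 2 :=
    integral_nonneg (by linarith) fun z hz => mul_nonneg (by linarith [hz.1]) (sq_nonneg _)
  linarith

theorem le_mul_exp_of_hasDerivAt_le_mul {f f' : ℝ → ℝ} {K a b : ℝ}
    (hf : ∀ t ∈ Icc a b, HasDerivAt f (f' t) t) (bound : ∀ t ∈ Icc a b, f' t ≤ K * f t) :
    ∀ t ∈ Icc a b, f t ≤ f a * exp (K * (t - a)) := by
  intro t ht
  rw [← gronwallBound_ε0]
  refine le_gronwallBound_of_liminf_deriv_right_le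
    (fun t ht => (hf t ht).continuousAt.continuousWithinAt)
    (fun t ht _ hr =>
      (hf t (Ico_subset_Icc_self ht)).hasDerivWithinAt.liminf_right_slope_le hr)
    le_rfl (fun t ht => by simpa using bound t (Ico_subset_Icc_self ht)) t ht

theorem integral_two_mul_mul_eq_of_pde {u ut uz g : ℝ → ℝ}
    (hu : ∀ z, HasDerivAt u (uz z) z) (huz : Continuous uz)
    (hg : ∀ z, HasDerivAt g (u z) z) (hgper : g (-π) = g π)
    (hpde : ∀ z ∈ Icc (-π) π, ut z + (1 / 6) * ((z ^ 2 - π ^ 2) * uz z + 2 * z * u z) = g z) :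
    ∫ z in (-π)..π, 2 * u z * ut z = -(1 / 3) * ∫ z in (-π)..π, z * u z ^ 2 := by
  have hcont : Continuous u := continuous_iff_continuousAt.2 fun z => (hu z).continuousAt
  have hgcont : Continuous g := continuous_iff_continuousAt.2 fun z => (hg z).continuousAt
  have hweight : ∀ z, HasDerivAt (fun z : ℝ => z ^ 2 - π ^ 2) (2 * z) z := fun z => by
    simpa using (hasDerivAt_pow 2 z).sub_const (π ^ 2)
  have hnonlocal := integral_mul_deriv_eq_zero_of_eq hg hcont hgper
  have htransport := integral_deriv_weight_mul_sq_eq_zero (a := -π) (b := π) hweight hu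
    (by fun_prop) huz (by simp) (by simp)
  calc ∫ z in (-π)..π, 2 * u z * ut z
      = ∫ z in (-π)..π, 2 * (g z * u z)
          - (1 / 6) * (2 * z * u z ^ 2 + (z ^ 2 - π ^ 2) * (2 * u z * uz z))
          - (1 / 3) * (z * u z ^ 2) := by
        refine integral_congr fun z hz => ?_
        rw [uIcc_of_le (by linarith [pi_pos])] at hz
        linear_combination 2 * u z * hpde z hz
    _ = -(1 / 3) * ∫ z in (-π)..π, z * u z ^ 2 := by
        rw [integral_sub, integral_sub, integral_const_mul, integral_const_mul, integral_const_mul,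
          hnonlocal, htransport]
        · ring
        all_goals exact Continuous.intervalIntegrable (by fun_prop) _ _

theorem full_evolution_energy_bound_general
    (T : ℝ)
    (v vt vz g : ℝ → ℝ → ℝ)
    (hv : Continuous fun p : ℝ × ℝ => v p.1 p.2)
    (hvt : Continuous fun p : ℝ × ℝ => vt p.1 p.2)
    (hvz : Continuous fun p : ℝ × ℝ => vz p.1 p.2)
    (hdt : ∀ t z : ℝ, HasDerivAt (fun t => v t z) (vt t z) t)
    (hdz : ∀ t z : ℝ, HasDerivAt (fun z => v t z) (vz t z) z)
    (hganti : ∀ t z : ℝ, HasDerivAt (fun z => g t z) (v t z) z)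
    (hgper : ∀ t : ℝ, g t (-π) = g t π)
    (hpde : ∀ t ∈ Set.Icc 0 T, ∀ z ∈ Set.Icc (-π) π,
      vt t z + (1 / 6) * ((z ^ 2 - π ^ 2) * vz t z + 2 * z * v t z) = g t z) :
    (∀ t ∈ Set.Icc 0 T,
      HasDerivAt (fun t => (1 / 2) * ∫ z in (-π)..π, (v t z) ^ 2)
        (-(1 / 6) * ∫ z in (-π)..π, z * (v t z) ^ 2) t) ∧
    (∀ t ∈ Set.Icc 0 T,
      (∫ z in (-π)..π, (v t z) ^ 2)
        ≤ (∫ z in (-π)..π, (v 0 z) ^ 2) * Real.exp (π * t / 3)) := by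
  have hE : ∀ t ∈ Icc 0 T, HasDerivAt (fun t => ∫ z in (-π)..π, v t z ^ 2)
      (-(1 / 3) * ∫ z in (-π)..π, z * v t z ^ 2) t := fun t ht => by
    rw [← integral_two_mul_mul_eq_of_pde (hdz t) (hvz.uncurry_left t) (hganti t) (hgper t)
      (hpde t ht)]
    refine hasDerivAt_intervalIntegral_of_continuous (fun t => (hv.uncurry_left t).pow 2)
      (by fun_prop : Continuous (uncurry fun t z => 2 * v t z * vt t z)) (fun t z => ?_) t
    simpa using (hdt t z).fun_pow 2
  refine ⟨fun t ht => ((hE t ht).const_mul (1 / 2)).congr_deriv (by ring), fun t ht => ?_⟩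
  have hbound : ∀ t ∈ Icc 0 T, -(1 / 3) * ∫ z in (-π)..π, z * v t z ^ 2
      ≤ π / 3 * ∫ z in (-π)..π, v t z ^ 2 := fun t _ => by
    linarith [neg_integral_mul_sq_le (hv.uncurry_left t) pi_pos.le]
  convert le_mul_exp_of_hasDerivAt_le_mul hE hbound t ht using 3
  ring

theorem full_evolution_energy_bound
    (T : ℝ) (hT : 0 < T)
    (v vt vz g : ℝ → ℝ → ℝ)
    (hv : Continuous fun p : ℝ × ℝ => v p.1 p.2)
    (hvt : Continuous fun p : ℝ × ℝ => vt p.1 p.2)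
    (hvz : Continuous fun p : ℝ × ℝ => vz p.1 p.2)
    (hdt : ∀ t z : ℝ, HasDerivAt (fun t => v t z) (vt t z) t)
    (hdz : ∀ t z : ℝ, HasDerivAt (fun z => v t z) (vz t z) z)
    (hganti : ∀ t z : ℝ, HasDerivAt (fun z => g t z) (v t z) z)
    (hgmean : ∀ t : ℝ, ∫ z in (-π)..π, g t z = 0)
    (hgper : ∀ t : ℝ, g t (-π) = g t π)
    (hvmean : ∀ t : ℝ, ∫ z in (-π)..π, v t z = 0)
    (hpde : ∀ t ∈ Set.Icc 0 T, ∀ z ∈ Set.Icc (-π) π,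
      vt t z + (1 / 6) * ((z ^ 2 - π ^ 2) * vz t z + 2 * z * v t z) = g t z) :
    (∀ t ∈ Set.Icc 0 T,
      HasDerivAt (fun t => (1 / 2) * ∫ z in (-π)..π, (v t z) ^ 2)
        (-(1 / 6) * ∫ z in (-π)..π, z * (v t z) ^ 2) t) ∧
    (∀ t ∈ Set.Icc 0 T,
      (∫ z in (-π)..π, (v t z) ^ 2)
        ≤ (∫ z in (-π)..π, (v 0 z) ^ 2) * Real.exp (π * t / 3)) :=
  full_evolution_energy_bound_general T v vt vz g hv hvt hvz hdt hdz hganti hgper hpde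
end

section
/- Define v_0(x) = x(π^2 - x^2)/(1 + a^2 x^2) for x ∈ [-π, π] and a > 0. Then ‖v_0‖_{L^1(-π,π)} = (π^2/a^2 + 1/a^4) log(1 + π^2 a^2) - π^2/a^2, and ‖v_0‖_{L^2(-π,π)}^2 = (1/a^3)[(π^4 + 6π^2/a^2 + 5/a^4) arctan(πa) - π(15 + 13π^2 a^2)/(3a^3)]. Moreover, for any constant κ > 0, there exists a > 0 such that ‖v_0‖_{L^1} ≤ κ ‖v_0‖_{L^2}. -/
/-!
Both norms are computed from explicit primitives obtained by partial fractions in `x`: on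
`[0, π]` the function `v₀` is nonnegative, so by oddness `‖v₀‖_{L¹} = 2 ∫₀^π v₀`, which gives the
logarithm; `v₀²` has a primitive involving `arctan (a x)`. For the comparison, the `L¹` norm is
`O(log a / a²)` while the `L²` norm is bounded below by a multiple of `a^(-3/2)`, because
`arctan (π a) ≥ π / 4` once `a ≥ 1`.
-/

open Real MeasureTheory intervalIntegral

theorem integral_neg_self_of_even {f : ℝ → ℝ} {c : ℝ} (heven : ∀ x, f (-x) = f x)
    (hf : IntervalIntegrable f volume 0 c) :
    ∫ x in -c..c, f x = 2 * ∫ x in 0..c, f x := by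
  have hflip : ∫ x in -c..0, f x = ∫ x in 0..c, f x := by
    simpa [heven] using (integral_comp_neg (a := 0) (b := c) f).symm
  have hf' : IntervalIntegrable f volume (-c) 0 := by
    simpa [heven] using ((IntervalIntegrable.iff_comp_neg).mp hf).symm
  rw [← integral_add_adjacent_intervals hf' hf, hflip, two_mul]

noncomputable def initialData (a x : ℝ) : ℝ := x * (π ^ 2 - x ^ 2) / (1 + a ^ 2 * x ^ 2)

section InitialData

variable {a : ℝ}

lemma one_add_sq_mul_sq_pos (a x : ℝ) : 0 < 1 + a ^ 2 * x ^ 2 := by positivity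

lemma continuous_initialData (a : ℝ) : Continuous (initialData a) :=
  .div (by fun_prop) (by fun_prop) fun x => (one_add_sq_mul_sq_pos a x).ne'

lemma initialData_neg (a x : ℝ) : initialData a (-x) = -initialData a x := by
  unfold initialData; ring

lemma initialData_nonneg {x : ℝ} (hx₀ : 0 ≤ x) (hxπ : x ≤ π) : 0 ≤ initialData a x := by
  have : 0 ≤ π ^ 2 - x ^ 2 := by nlinarith
  exact div_nonneg (mul_nonneg hx₀ this) (one_add_sq_mul_sq_pos a x).le

/-- From the partial fractions `v₀ x = (π² + a⁻²) x / (1 + a²x²) - x / a²`. -/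
noncomputable def initialDataPrimitive (a x : ℝ) : ℝ :=
  ((π ^ 2 + 1 / a ^ 2) * log (1 + a ^ 2 * x ^ 2) - x ^ 2) / (2 * a ^ 2)

lemma hasDerivAt_initialDataPrimitive (ha : a ≠ 0) (x : ℝ) :
    HasDerivAt (initialDataPrimitive a) (initialData a x) x := by
  have hden : HasDerivAt (fun x : ℝ => 1 + a ^ 2 * x ^ 2) (a ^ 2 * (2 * x)) x := by
    simpa using ((hasDerivAt_pow 2 x).const_mul (a ^ 2)).const_add 1
  have hderiv := (((hden.log (one_add_sq_mul_sq_pos a x).ne').const_mul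
    (π ^ 2 + 1 / a ^ 2)).sub (hasDerivAt_pow 2 x)).div_const (2 * a ^ 2)
  refine hderiv.congr_deriv ?_
  have hden_ne := (one_add_sq_mul_sq_pos a x).ne'
  unfold initialData
  field_simp
  ring

theorem integral_abs_initialData (ha : a ≠ 0) :
    ∫ x in -π..π, |initialData a x|
      = (π ^ 2 / a ^ 2 + 1 / a ^ 4) * log (1 + π ^ 2 * a ^ 2) - π ^ 2 / a ^ 2 := by
  have hcont := continuous_initialData a
  have habs : ∫ x in 0..π, |initialData a x| = ∫ x in 0..π, initialData a x := by
    refine integral_congr fun x hx => abs_of_nonneg ?_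
    rw [Set.uIcc_of_le pi_pos.le] at hx
    exact initialData_nonneg hx.1 hx.2
  rw [integral_neg_self_of_even (fun x => by rw [initialData_neg, abs_neg])
      (hcont.abs.intervalIntegrable _ _), habs,
    integral_eq_sub_of_hasDerivAt (fun x _ => hasDerivAt_initialDataPrimitive ha x)
      (hcont.intervalIntegrable _ _)]
  simp only [initialDataPrimitive, zero_pow two_ne_zero, mul_zero, add_zero, log_one]
  field_simp
  ring

/-- From the partial fractions of `v₀²` in `x`: a polynomial part, a multiple of
`1 / (1 + a²x²)` and a multiple of `1 / (1 + a²x²)²`. -/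
noncomputable def initialDataSqPrimitive (a x : ℝ) : ℝ :=
  x ^ 3 / (3 * a ^ 4) - (2 * π ^ 2 * a ^ 2 + 2) * x / a ^ 6
    + (π ^ 4 * a ^ 4 + 4 * π ^ 2 * a ^ 2 + 3) / a ^ 7 * arctan (a * x)
    - (π ^ 2 * a ^ 2 + 1) ^ 2 / (2 * a ^ 6) * (x / (1 + a ^ 2 * x ^ 2) + arctan (a * x) / a)

lemma hasDerivAt_initialDataSqPrimitive (ha : a ≠ 0) (x : ℝ) :
    HasDerivAt (initialDataSqPrimitive a) (initialData a x ^ 2) x := by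
  have harctan : HasDerivAt (fun x : ℝ => arctan (a * x)) (1 / (1 + (a * x) ^ 2) * a) x :=
    (hasDerivAt_arctan (a * x)).comp x (by simpa using (hasDerivAt_id x).const_mul a)
  have hden : HasDerivAt (fun x : ℝ => 1 + a ^ 2 * x ^ 2) (a ^ 2 * (2 * x)) x := by
    simpa using ((hasDerivAt_pow 2 x).const_mul (a ^ 2)).const_add 1
  have hfrac := (hasDerivAt_id x).div hden (one_add_sq_mul_sq_pos a x).ne'
  have hderiv := ((((hasDerivAt_pow 3 x).div_const (3 * a ^ 4)).sub
    (((hasDerivAt_id x).const_mul (2 * π ^ 2 * a ^ 2 + 2)).div_const (a ^ 6))).add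
    (harctan.const_mul ((π ^ 4 * a ^ 4 + 4 * π ^ 2 * a ^ 2 + 3) / a ^ 7))).sub
    ((hfrac.add (harctan.div_const a)).const_mul ((π ^ 2 * a ^ 2 + 1) ^ 2 / (2 * a ^ 6)))
  refine hderiv.congr_deriv ?_
  have hden_ne := (one_add_sq_mul_sq_pos a x).ne'
  have harg_ne : 1 + (a * x) ^ 2 ≠ 0 := by positivity
  simp only [initialData, id]
  field_simp
  ring

theorem integral_sq_initialData (ha : a ≠ 0) :
    ∫ x in -π..π, initialData a x ^ 2
      = (1 / a ^ 3) * ((π ^ 4 + 6 * π ^ 2 / a ^ 2 + 5 / a ^ 4) * arctan (π * a)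
        - π * (15 + 13 * π ^ 2 * a ^ 2) / (3 * a ^ 3)) := by
  rw [integral_eq_sub_of_hasDerivAt (fun x _ => hasDerivAt_initialDataSqPrimitive ha x)
    (((continuous_initialData a).pow 2).intervalIntegrable _ _)]
  simp only [initialDataSqPrimitive, mul_neg, arctan_neg, neg_sq, mul_comm π a]
  have hden_ne := (one_add_sq_mul_sq_pos a π).ne'
  field_simp
  ring

end InitialData

lemma pi_sq_lt_ten : π ^ 2 < 10 := by nlinarith [pi_lt_d2, pi_pos]

lemma integral_abs_initialData_formula_le {b : ℝ} (hb : 1 ≤ b) :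
    (π ^ 2 / b ^ 2 + 1 / b ^ 4) * log (1 + π ^ 2 * b ^ 2) - π ^ 2 / b ^ 2
      ≤ 11 / b ^ 2 * log (1 + π ^ 2 * b ^ 2) := by
  have hb2 : 1 ≤ b ^ 2 := one_le_pow₀ hb
  have hcoef : π ^ 2 / b ^ 2 + 1 / b ^ 4 ≤ 11 / b ^ 2 := by
    have h4 : 1 / b ^ 4 ≤ 1 / b ^ 2 :=
      one_div_le_one_div_of_le (by positivity) (pow_le_pow_right₀ hb (by norm_num))
    have h2 : π ^ 2 / b ^ 2 ≤ 10 / b ^ 2 := by gcongr; exact pi_sq_lt_ten.le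
    linarith [show 11 / b ^ 2 = 10 / b ^ 2 + 1 / b ^ 2 by ring]
  have hlog : 0 ≤ log (1 + π ^ 2 * b ^ 2) := log_nonneg (by nlinarith [sq_nonneg (π * b)])
  nlinarith [mul_le_mul_of_nonneg_right hcoef hlog, show 0 ≤ π ^ 2 / b ^ 2 by positivity]

lemma log_one_add_pi_sq_mul_pow_eight_le {c : ℝ} (hc : 1 ≤ c) :
    log (1 + π ^ 2 * (c ^ 4) ^ 2) ≤ 16 * c := by
  have hc8 : 1 ≤ c ^ 8 := one_le_pow₀ hc
  calc log (1 + π ^ 2 * (c ^ 4) ^ 2) ≤ log ((2 * c) ^ 8) :=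
        log_le_log (by positivity) (by nlinarith [pi_sq_lt_ten])
    _ = 8 * log (2 * c) := by rw [log_pow]; norm_num
    _ ≤ 16 * c := by linarith [log_le_sub_one_of_pos (show 0 < 2 * c by linarith)]

lemma sixty_four_le_integral_sq_initialData_bracket {b : ℝ} (hb : 16 ≤ b) :
    64 ≤ (π ^ 4 + 6 * π ^ 2 / b ^ 2 + 5 / b ^ 4) * arctan (π * b)
      - π * (15 + 13 * π ^ 2 * b ^ 2) / (3 * b ^ 3) := by
  have hπ := pi_gt_d2.le
  have harctan : π / 4 ≤ arctan (π * b) := by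
    rw [← arctan_one]
    exact arctan_strictMono.monotone (by nlinarith)
  have hmain : π ^ 4 * (π / 4) ≤ (π ^ 4 + 6 * π ^ 2 / b ^ 2 + 5 / b ^ 4) * arctan (π * b) :=
    mul_le_mul (by linarith [show 0 ≤ 6 * π ^ 2 / b ^ 2 + 5 / b ^ 4 by positivity]) harctan
      (by positivity) (by positivity)
  have htail : π * (15 + 13 * π ^ 2 * b ^ 2) / (3 * b ^ 3) ≤ 9 := by
    rw [div_le_iff₀ (by positivity)]
    have hπ3 : π ^ 3 ≤ 32 := by nlinarith [pi_lt_d2, pi_sq_lt_ten]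
    have hb2 : 256 ≤ b ^ 2 := by nlinarith
    nlinarith [pi_lt_d2, mul_le_mul_of_nonneg_right hπ3 (sq_nonneg b),
      mul_le_mul_of_nonneg_right hb (sq_nonneg b)]
  have hπ5 : 3.14 ^ 5 ≤ π ^ 5 := pow_le_pow_left₀ (by norm_num) hπ 5
  nlinarith

/-- With `a = c⁴` the bounds above give `‖v₀‖_{L¹} ≤ 176 / c⁷` and `‖v₀‖_{L²} ≥ 8 / c⁶`. -/
theorem exists_integral_abs_initialData_le_mul_sqrt {κ : ℝ} (hκ : 0 < κ) :
    ∃ a, 0 < a ∧ ∫ x in -π..π, |initialData a x|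
      ≤ κ * √(∫ x in -π..π, initialData a x ^ 2) := by
  set c := max 2 (22 / κ)
  have hc : 2 ≤ c := le_max_left _ _
  have hκc : 22 ≤ κ * c := by
    have := le_max_right 2 (22 / κ)
    rwa [div_le_iff₀ hκ, mul_comm] at this
  have hc0 : 0 < c := by linarith
  have hb : 16 ≤ c ^ 4 := by nlinarith [pow_le_pow_left₀ (by norm_num) hc 4]
  refine ⟨c ^ 4, by positivity, ?_⟩
  rw [integral_abs_initialData (by positivity), integral_sq_initialData (by positivity)]
  have hL1 : (π ^ 2 / (c ^ 4) ^ 2 + 1 / (c ^ 4) ^ 4) * log (1 + π ^ 2 * (c ^ 4) ^ 2)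
      - π ^ 2 / (c ^ 4) ^ 2 ≤ 176 / c ^ 7 :=
    calc _ ≤ 11 / (c ^ 4) ^ 2 * log (1 + π ^ 2 * (c ^ 4) ^ 2) := integral_abs_initialData_formula_le (by linarith)
      _ ≤ 11 / (c ^ 4) ^ 2 * (16 * c) := by
          gcongr; exact log_one_add_pi_sq_mul_pow_eight_le (by linarith)
      _ = 176 / c ^ 7 := by field_simp; ring
  have hL2 : 8 / c ^ 6 ≤ √((1 / (c ^ 4) ^ 3) * ((π ^ 4 + 6 * π ^ 2 / (c ^ 4) ^ 2
      + 5 / (c ^ 4) ^ 4) * arctan (π * c ^ 4)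
      - π * (15 + 13 * π ^ 2 * (c ^ 4) ^ 2) / (3 * (c ^ 4) ^ 3))) := by
    rw [le_sqrt' (by positivity)]
    calc (8 / c ^ 6) ^ 2 = 1 / (c ^ 4) ^ 3 * 64 := by field_simp; ring
      _ ≤ _ := by gcongr; exact sixty_four_le_integral_sq_initialData_bracket hb
  calc _ ≤ 176 / c ^ 7 := hL1
    _ ≤ κ * (8 / c ^ 6) := by
        rw [div_le_iff₀ (by positivity), mul_div_assoc', div_mul_eq_mul_div,
          le_div_iff₀ (by positivity)]
        nlinarith [pow_pos hc0 6, pow_pos hc0 7]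
    _ ≤ _ := by gcongr

theorem example_initial_data (a : ℝ) (ha : 0 < a) :
    (∫ x in (-π)..π, |x * (π ^ 2 - x ^ 2) / (1 + a ^ 2 * x ^ 2)|
        = (π ^ 2 / a ^ 2 + 1 / a ^ 4) * Real.log (1 + π ^ 2 * a ^ 2) - π ^ 2 / a ^ 2) ∧
    (∫ x in (-π)..π, (x * (π ^ 2 - x ^ 2) / (1 + a ^ 2 * x ^ 2)) ^ 2
        = (1 / a ^ 3) * ((π ^ 4 + 6 * π ^ 2 / a ^ 2 + 5 / a ^ 4) * Real.arctan (π * a)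
            - π * (15 + 13 * π ^ 2 * a ^ 2) / (3 * a ^ 3))) ∧
    (∀ κ : ℝ, 0 < κ → ∃ b : ℝ, 0 < b ∧
      (∫ x in (-π)..π, |x * (π ^ 2 - x ^ 2) / (1 + b ^ 2 * x ^ 2)|)
        ≤ κ * Real.sqrt (∫ x in (-π)..π, (x * (π ^ 2 - x ^ 2) / (1 + b ^ 2 * x ^ 2)) ^ 2)) :=
  ⟨integral_abs_initialData ha.ne', integral_sq_initialData ha.ne',
    fun _ hκ => exists_integral_abs_initialData_le_mul_sqrt hκ⟩
end

section
/- The transcendental equation (π^2 + 3λ) log((√(π^2 - 6λ) + π)/(√(π^2 - 6λ) - π)) - 3π√(π^2 - 6λ) = 0 has exactly one solution λ₁ in (-∞, 0), i.e., the function F(λ) = (π^2 + 3λ) log((√(π^2 - 6λ) + π)/(√(π^2 - 6λ) - π)) - 3π√(π^2 - 6λ) has a unique zero on λ < 0. -/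
/-!
Write `s = √(π² - 6λ)`, so that `s > π` for `λ < 0` and `s` decreases as `λ` increases.
For `λ ≤ -π²/3` both terms of `F` are negative, so every zero lies in `(-π²/3, 0)`.
There `F = (π² + 3λ) · log((s + π)/(s - π)) - 3πs` is strictly increasing: `π² + 3λ` is
positive and increasing, the logarithm is positive and increasing, and `-3πs` is increasing.
Existence follows from the intermediate value theorem between `-π²/3`, where `F < 0`, and a
point close to `0` where `s = 101π/100`, so that the logarithm is `log 201 > 4`.
-/

open Real Set

namespace ReducedOstrovsky

noncomputable def F (l : ℝ) : ℝ :=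
  (π ^ 2 + 3 * l) * log ((√(π ^ 2 - 6 * l) + π) / (√(π ^ 2 - 6 * l) - π))
    - 3 * π * √(π ^ 2 - 6 * l)

theorem one_lt_add_div_sub {a x : ℝ} (ha : 0 < a) (hx : a < x) : 1 < (x + a) / (x - a) := by
  rw [one_lt_div (by linarith)]
  linarith

theorem strictAntiOn_log_add_div_sub {a : ℝ} (ha : 0 < a) :
    StrictAntiOn (fun x => log ((x + a) / (x - a))) (Ioi a) := by
  intro x (hx : a < x) y (hy : a < y) hxy
  apply log_lt_log (by linarith [one_lt_add_div_sub ha hy])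
  rw [div_lt_div_iff₀ (by linarith) (by linarith)]
  nlinarith

theorem pi_lt_sqrt {l : ℝ} (hl : l < 0) : π < √(π ^ 2 - 6 * l) :=
  lt_sqrt_of_sq_lt (by linarith)

theorem F_neg_of_le {l : ℝ} (hl : l ≤ -π ^ 2 / 3) : F l < 0 := by
  have hl0 : l < 0 := by linarith [sq_pos_of_pos pi_pos]
  have hs := pi_lt_sqrt hl0
  have hlog : 0 < log ((√(π ^ 2 - 6 * l) + π) / (√(π ^ 2 - 6 * l) - π)) :=
    log_pos (one_lt_add_div_sub pi_pos hs)
  have hprod := mul_nonpos_of_nonpos_of_nonneg (by linarith : π ^ 2 + 3 * l ≤ 0) hlog.le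
  have hsqrt : 0 < 3 * π * √(π ^ 2 - 6 * l) := mul_pos (by positivity) (pi_pos.trans hs)
  unfold F
  linarith

theorem mem_Ioo_of_F_eq_zero {l : ℝ} (hl : l < 0) (hF : F l = 0) :
    l ∈ Ioo (-π ^ 2 / 3) 0 :=
  ⟨lt_of_not_ge fun h => (F_neg_of_le h).ne hF, hl⟩

theorem F_strictMonoOn : StrictMonoOn F (Ioo (-π ^ 2 / 3) 0) := by
  intro l₁ ⟨hl₁, hl₁0⟩ l₂ ⟨_, hl₂0⟩ hl
  have hs₁ := pi_lt_sqrt hl₁0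
  have hs₂ := pi_lt_sqrt hl₂0
  have hs : √(π ^ 2 - 6 * l₂) < √(π ^ 2 - 6 * l₁) :=
    sqrt_lt_sqrt (by linarith) (by linarith)
  have hlog := strictAntiOn_log_add_div_sub pi_pos hs₂ hs₁ hs
  have hlog₁ := log_pos (one_lt_add_div_sub pi_pos hs₁)
  have hprod :
      (π ^ 2 + 3 * l₁) * log ((√(π ^ 2 - 6 * l₁) + π) / (√(π ^ 2 - 6 * l₁) - π))
        < (π ^ 2 + 3 * l₂) * log ((√(π ^ 2 - 6 * l₂) + π) / (√(π ^ 2 - 6 * l₂) - π)) :=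
    mul_lt_mul'' (by linarith) hlog (by linarith) hlog₁.le
  have hsqrt := mul_lt_mul_of_pos_left hs (by positivity : 0 < 3 * π)
  unfold F
  linarith

theorem continuousOn_F : ContinuousOn F (Iio 0) := by
  have hs : Continuous fun l : ℝ => √(π ^ 2 - 6 * l) := by fun_prop
  have hden : ∀ l ∈ Iio (0 : ℝ), √(π ^ 2 - 6 * l) - π ≠ 0 :=
    fun l hl => (sub_pos.2 (pi_lt_sqrt hl)).ne'
  have hratio :
      ∀ l ∈ Iio (0 : ℝ), (√(π ^ 2 - 6 * l) + π) / (√(π ^ 2 - 6 * l) - π) ≠ 0 :=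
    fun l hl => (zero_lt_one.trans (one_lt_add_div_sub pi_pos (pi_lt_sqrt hl))).ne'
  unfold F
  exact (continuousOn_const.add (continuousOn_const.mul continuousOn_id)).mul
    (((hs.add continuous_const).continuousOn.div (hs.sub continuous_const).continuousOn
      hden).log hratio) |>.sub (continuous_const.mul hs).continuousOn

theorem four_lt_log_201 : 4 < log 201 := by
  rw [lt_log_iff_exp_lt (by norm_num), show (4 : ℝ) = (4 : ℕ) by norm_num, ← exp_one_pow]
  calc exp 1 ^ 4 < 3 ^ 4 := pow_lt_pow_left₀ exp_one_lt_three (exp_pos 1).le (by norm_num)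
    _ < 201 := by norm_num

theorem F_pos_near_zero : 0 < F (π ^ 2 * (1 - (101 / 100) ^ 2) / 6) := by
  have hs : √(π ^ 2 - 6 * (π ^ 2 * (1 - (101 / 100) ^ 2) / 6)) = 101 * π / 100 := by
    rw [show π ^ 2 - 6 * (π ^ 2 * (1 - (101 / 100) ^ 2) / 6) = (101 * π / 100) ^ 2 by ring]
    exact sqrt_sq (by positivity)
  have hratio : (101 * π / 100 + π) / (101 * π / 100 - π) = 201 := by
    rw [div_eq_iff (by linarith [pi_pos])]
    ring
  unfold F
  rw [hs, hratio]
  nlinarith [four_lt_log_201, sq_pos_of_pos pi_pos]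

theorem exists_F_eq_zero : ∃ l ∈ Ioo (-π ^ 2 / 3) 0, F l = 0 := by
  have hπ := sq_pos_of_pos pi_pos
  have hab : -π ^ 2 / 3 ≤ π ^ 2 * (1 - (101 / 100) ^ 2) / 6 := by linarith
  have hb : π ^ 2 * (1 - (101 / 100) ^ 2) / 6 < 0 := by linarith
  obtain ⟨l, hl, hFl⟩ := intermediate_value_Icc hab
    (continuousOn_F.mono fun x hx => hx.2.trans_lt hb)
    ⟨(F_neg_of_le le_rfl).le, F_pos_near_zero.le⟩
  exact ⟨l, mem_Ioo_of_F_eq_zero (hl.2.trans_lt hb) hFl, hFl⟩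

end ReducedOstrovsky

open ReducedOstrovsky in
theorem unique_negative_eigenvalue :
    ∃! l : ℝ, l < 0 ∧
      (π ^ 2 + 3 * l) *
          Real.log ((Real.sqrt (π ^ 2 - 6 * l) + π) / (Real.sqrt (π ^ 2 - 6 * l) - π))
        - 3 * π * Real.sqrt (π ^ 2 - 6 * l) = 0 := by
  obtain ⟨c, hc, hFc⟩ := exists_F_eq_zero
  refine ⟨c, ⟨hc.2, hFc⟩, fun l ⟨hl, hFl⟩ => ?_⟩
  exact F_strictMonoOn.injOn (mem_Ioo_of_F_eq_zero hl hFl) hc (hFl.trans hFc.symm)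
end
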